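/- Let $\theta>1$ and let $a_0:\mathbb{R}\to\mathbb{R}$ be bounded and continuous with $e^{\int_0^t a_0}\in L^1((-\infty,0])$. Then the scalar ODE $w'=\frac{1}{\theta-1}a_0(t)\,w-\frac{1}{\theta-1}w^{\theta}$ has an entire solution $w_0:\mathbb{R}\to(0,\infty)$ that is bounded; explicitly, $w_0(t)=\big(\int_{-\infty}^t e^{-\int_s^t a_0}\,ds\big)^{\frac{1}{1-\theta}}$. -/

import Mathlib

/-!
With `A t = ∫₀ᵗ a₀`, the integral `I t = ∫_{-∞}^t e^{-∫ₛᵗ a₀} ds = e^{-A t} ∫_{-∞}^t e^{A s} ds`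
is an entire solution of the linear equation `I' = 1 - a₀ I`, and the Bernoulli substitution
`w = I ^ (1 / (1 - θ))` turns that linear equation into the given one. Since `|a₀| ≤ M`, the
integrand is at least `e^{-M}` on `[t - 1, t]`, so `I ≥ e^{-M}`; as the exponent `1 / (1 - θ)` is
negative, `w` is bounded by `e^{-M} ^ (1 / (1 - θ))`.
-/

open MeasureTheory Set Filter

section IntegralIic

variable {E : Type*} [NormedAddCommGroup E] {f : ℝ → E}

theorem Continuous.integrableOn_Iic_of_integrableOn_Iic (hf : Continuous f) {a : ℝ}
    (h : IntegrableOn f (Iic a)) (b : ℝ) : IntegrableOn f (Iic b) :=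
  integrableOn_Iic_iff_integrableAtFilter_atBot.2
    ⟨⟨Iic a, Iic_mem_atBot a, h⟩, hf.locallyIntegrable.locallyIntegrableOn _⟩

theorem Continuous.hasDerivAt_integral_Iic [NormedSpace ℝ E] [CompleteSpace E] (hf : Continuous f)
    (hint : ∀ t, IntegrableOn f (Iic t)) (t : ℝ) :
    HasDerivAt (fun u => ∫ s in Iic u, f s) (f t) t := by
  have hsplit : (fun u => ∫ s in Iic u, f s) =
      fun u => (∫ s in Iic 0, f s) + ∫ s in (0:ℝ)..u, f s := by
    funext u
    rw [← intervalIntegral.integral_Iic_sub_Iic (hint 0) (hint u)]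
    abel
  rw [hsplit]
  exact (hf.integral_hasStrictDerivAt 0 t).hasDerivAt.const_add _

end IntegralIic

section LinearEquation

variable {a : ℝ → ℝ}

/-- An entire solution of the linear equation `y' = 1 - a y`. -/
noncomputable def linearEntireSolution (a : ℝ → ℝ) (t : ℝ) : ℝ :=
  ∫ s in Iic t, Real.exp (-∫ r in s..t, a r)

theorem exp_neg_integral_eq_mul (ha : Continuous a) (t : ℝ) :
    (fun s => Real.exp (-∫ r in s..t, a r)) =
      fun s => Real.exp (-∫ r in (0:ℝ)..t, a r) * Real.exp (∫ r in (0:ℝ)..s, a r) := by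
  funext s
  rw [← Real.exp_add, ← intervalIntegral.integral_interval_sub_left
    (ha.intervalIntegrable 0 t) (ha.intervalIntegrable 0 s)]
  ring_nf

theorem integrableOn_exp_integral_Iic (ha : Continuous a)
    (hint : IntegrableOn (fun t => Real.exp (∫ s in (0:ℝ)..t, a s)) (Iic 0)) (t : ℝ) :
    IntegrableOn (fun s => Real.exp (∫ r in (0:ℝ)..s, a r)) (Iic t) :=
  (Real.continuous_exp.comp (intervalIntegral.continuous_primitive
    ha.intervalIntegrable 0)).integrableOn_Iic_of_integrableOn_Iic hint t

theorem linearEntireSolution_eq (ha : Continuous a) (t : ℝ) :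
    linearEntireSolution a t =
      Real.exp (-∫ r in (0:ℝ)..t, a r) * ∫ s in Iic t, Real.exp (∫ r in (0:ℝ)..s, a r) := by
  rw [linearEntireSolution, exp_neg_integral_eq_mul ha, integral_const_mul]

theorem hasDerivAt_linearEntireSolution (ha : Continuous a)
    (hint : IntegrableOn (fun t => Real.exp (∫ s in (0:ℝ)..t, a s)) (Iic 0)) (t : ℝ) :
    HasDerivAt (linearEntireSolution a) (1 - a t * linearEntireSolution a t) t := by
  have hA : HasDerivAt (fun u => ∫ r in (0:ℝ)..u, a r) (a t) t :=
    (ha.integral_hasStrictDerivAt 0 t).hasDerivAt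
  have hJ : HasDerivAt (fun u => ∫ s in Iic u, Real.exp (∫ r in (0:ℝ)..s, a r))
      (Real.exp (∫ r in (0:ℝ)..t, a r)) t :=
    (Real.continuous_exp.comp (intervalIntegral.continuous_primitive
      ha.intervalIntegrable 0)).hasDerivAt_integral_Iic (integrableOn_exp_integral_Iic ha hint) t
  rw [funext (linearEntireSolution_eq ha)]
  refine (hA.neg.exp.mul hJ).congr_deriv ?_
  simp only [Pi.neg_apply, mul_assoc, ← Real.exp_add, neg_add_cancel, Real.exp_zero]
  ring

theorem exp_neg_le_linearEntireSolution (ha : Continuous a)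
    (hint : IntegrableOn (fun t => Real.exp (∫ s in (0:ℝ)..t, a s)) (Iic 0))
    {M : ℝ} (hM : ∀ t, |a t| ≤ M) (t : ℝ) :
    Real.exp (-M) ≤ linearEntireSolution a t := by
  have hI : IntegrableOn (fun s => Real.exp (-∫ r in s..t, a r)) (Iic t) := by
    rw [exp_neg_integral_eq_mul ha]
    exact (integrableOn_exp_integral_Iic ha hint t).const_mul _
  have hwindow : ∀ s ∈ Ioc (t - 1) t, Real.exp (-M) ≤ Real.exp (-∫ r in s..t, a r) := by
    intro s hs
    have hbound : |∫ r in s..t, a r| ≤ M * |t - s| :=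
      intervalIntegral.norm_integral_le_of_norm_le_const fun x _ =>
        (Real.norm_eq_abs _).trans_le (hM x)
    have hts : |t - s| ≤ 1 := abs_le.2 ⟨by linarith [hs.2], by linarith [hs.1]⟩
    have hM0 : 0 ≤ M := (abs_nonneg _).trans (hM 0)
    have := abs_le.1 (hbound.trans (mul_le_of_le_one_right hM0 hts))
    exact Real.exp_le_exp.2 (by linarith)
  calc Real.exp (-M) = Real.exp (-M) * volume.real (Ioc (t - 1) t) := by simp
    _ ≤ ∫ s in Ioc (t - 1) t, Real.exp (-∫ r in s..t, a r) :=
      setIntegral_ge_of_const_le_real measurableSet_Ioc (by simp) hwindow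
        (hI.mono_set Ioc_subset_Iic_self)
    _ ≤ linearEntireSolution a t :=
      setIntegral_mono_set hI (ae_of_all _ fun s => (Real.exp_pos _).le)
        Ioc_subset_Iic_self.eventuallyLE

end LinearEquation

theorem HasDerivAt.rpow_one_div_one_sub {I : ℝ → ℝ} {a θ t : ℝ} (hθ : θ ≠ 1) (hI : 0 < I t)
    (hd : HasDerivAt I (1 - a * I t) t) :
    HasDerivAt (fun u => I u ^ (1 / (1 - θ)))
      (1 / (θ - 1) * a * I t ^ (1 / (1 - θ)) - 1 / (θ - 1) * (I t ^ (1 / (1 - θ))) ^ θ) t := by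
  have hθ' : 1 - θ ≠ 0 := sub_ne_zero.2 hθ.symm
  refine (hd.rpow_const (Or.inl hI.ne')).congr_deriv ?_
  have hpow : (I t ^ (1 / (1 - θ))) ^ θ = I t ^ (1 / (1 - θ)) * (I t)⁻¹ := by
    rw [← Real.rpow_mul hI.le, ← Real.rpow_neg_one, ← Real.rpow_add hI]
    congr 1
    field_simp
    ring
  rw [hpow, Real.rpow_sub_one hI.ne']
  field_simp
  ring

theorem stmt1 (θ : ℝ) (hθ : 1 < θ) (a0 : ℝ → ℝ) (hcont : Continuous a0)
    (hbdd : ∃ M, ∀ t, |a0 t| ≤ M)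
    (hint : IntegrableOn (fun t => Real.exp (∫ s in (0:ℝ)..t, a0 s)) (Iic 0)) :
    ∃ w0 : ℝ → ℝ,
      (∀ t, w0 t = (∫ s in Iic t, Real.exp (-∫ r in s..t, a0 r)) ^ (1 / (1 - θ))) ∧
      (∀ t, 0 < w0 t) ∧ (∃ M, ∀ t, w0 t ≤ M) ∧
      (∀ t, HasDerivAt w0 (1 / (θ - 1) * a0 t * w0 t - 1 / (θ - 1) * w0 t ^ θ) t) := by
  obtain ⟨M, hM⟩ := hbdd
  have hlower := exp_neg_le_linearEntireSolution hcont hint hM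
  have hpos : ∀ t, 0 < linearEntireSolution a0 t := fun t => (Real.exp_pos _).trans_le (hlower t)
  have hp_neg : 1 / (1 - θ) < 0 := one_div_neg.2 (sub_neg.2 hθ)
  refine ⟨fun t => linearEntireSolution a0 t ^ (1 / (1 - θ)), fun t => rfl,
    fun t => Real.rpow_pos_of_pos (hpos t) _,
    ⟨Real.exp (-M) ^ (1 / (1 - θ)), fun t =>
      Real.rpow_le_rpow_of_nonpos (Real.exp_pos _) (hlower t) hp_neg.le⟩,
    fun t => (hasDerivAt_linearEntireSolution hcont hint t).rpow_one_div_one_sub hθ.ne' (hpos t)⟩
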